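/- The function x ↦ √x · tanh(√x / 2) is concave on (0,∞). -/

import Mathlib

/-! Write the function as `g (√x)` with `g t = t * tanh (t / 2)`. If `g' t = t * φ t`, the chain
rule gives derivative `φ (√x) / 2`, so concavity reduces to `φ` being antitone. Here, with
`u = t / 2`, `2 φ t = tanh u / u + tanh' u`, where `tanh' u = (cosh u ^ 2)⁻¹` decreases because
`cosh` increases on `[0, ∞)`; hence `tanh` is concave on `[0, ∞)`, and `tanh u / u`, its secant
slope from `0`, decreases as well. -/

open Real Set

namespace Real

theorem hasDerivAt_tanh (x : ℝ) : HasDerivAt tanh (cosh x ^ 2)⁻¹ x := by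
  have h := (hasDerivAt_sinh x).div (hasDerivAt_cosh x) (cosh_pos x).ne'
  rw [show tanh = sinh / cosh from funext tanh_eq_sinh_div_cosh]
  refine h.congr_deriv ?_
  field_simp
  linarith [cosh_sq_sub_sinh_sq x]

theorem hasDerivAt_mul_tanh_half (t : ℝ) (ht : t ≠ 0) :
    HasDerivAt (fun t => t * tanh (t / 2))
      (t * ((tanh (t / 2) / (t / 2) + (cosh (t / 2) ^ 2)⁻¹) / 2)) t := by
  have h := (hasDerivAt_id t).mul ((hasDerivAt_tanh (t / 2)).comp t ((hasDerivAt_id t).div_const 2))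
  refine h.congr_deriv ?_
  simp only [id, Function.comp_apply]
  field_simp

theorem deriv_tanh : deriv tanh = fun x => (cosh x ^ 2)⁻¹ :=
  funext fun x => (hasDerivAt_tanh x).deriv

theorem differentiable_tanh : Differentiable ℝ tanh :=
  fun x => (hasDerivAt_tanh x).differentiableAt

theorem antitoneOn_inv_cosh_sq : AntitoneOn (fun x => (cosh x ^ 2)⁻¹) (Ici 0) := by
  intro a ha b hb hab
  have hcosh : cosh a ≤ cosh b := cosh_le_cosh.2 (by
    rw [abs_of_nonneg (mem_Ici.1 ha), abs_of_nonneg (mem_Ici.1 hb)]; exact hab)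
  exact inv_anti₀ (pow_pos (cosh_pos a) 2) (pow_le_pow_left₀ (cosh_pos a).le hcosh 2)

theorem concaveOn_tanh : ConcaveOn ℝ (Ici 0) tanh :=
  AntitoneOn.concaveOn_of_deriv (convex_Ici 0) differentiable_tanh.continuous.continuousOn
    differentiable_tanh.differentiableOn
    (by rw [deriv_tanh, interior_Ici]; exact antitoneOn_inv_cosh_sq.mono Ioi_subset_Ici_self)

theorem antitoneOn_tanh_div_self : AntitoneOn (fun x => tanh x / x) (Ioi 0) := by
  intro a ha b hb hab
  have h := concaveOn_tanh.antitoneOn_slope_gt self_mem_Ici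
    ⟨mem_Ici.2 (le_of_lt ha), ha⟩ ⟨mem_Ici.2 (le_of_lt hb), hb⟩ hab
  simpa only [slope_def_field, tanh_zero, sub_zero] using h

theorem antitoneOn_tanh_div_self_add_inv_cosh_sq :
    AntitoneOn (fun x => tanh x / x + (cosh x ^ 2)⁻¹) (Ioi 0) :=
  antitoneOn_tanh_div_self.add (antitoneOn_inv_cosh_sq.mono Ioi_subset_Ici_self)

end Real

theorem concaveOn_comp_sqrt_of_antitoneOn {g φ : ℝ → ℝ} (hg : ∀ t > 0, HasDerivAt g (t * φ t) t)
    (hφ : AntitoneOn φ (Ioi 0)) : ConcaveOn ℝ (Ioi 0) (fun x => g √x) := by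
  have hderiv : ∀ x > 0, HasDerivAt (fun x => g √x) (φ √x / 2) x := by
    intro x hx
    have hs := sqrt_pos.2 hx
    exact ((hg _ hs).comp x (hasDerivAt_sqrt hx.ne')).congr_deriv (by field_simp)
  have hdiff : DifferentiableOn ℝ (fun x => g √x) (Ioi 0) :=
    fun x hx => (hderiv x hx).differentiableAt.differentiableWithinAt
  refine AntitoneOn.concaveOn_of_deriv (convex_Ioi 0) hdiff.continuousOn
    (by rwa [interior_Ioi]) ?_
  rw [interior_Ioi]
  intro a ha b hb hab
  rw [(hderiv a ha).deriv, (hderiv b hb).deriv]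
  exact div_le_div_of_nonneg_right
    (hφ (sqrt_pos.2 ha) (sqrt_pos.2 hb) (sqrt_le_sqrt hab)) zero_le_two

/-- The function `x ↦ √x * tanh (√x / 2)` is concave on `(0, ∞)`. -/
theorem concaveOn_sqrt_mul_tanh_sqrt_half :
    ConcaveOn ℝ (Set.Ioi 0) (fun x : ℝ => Real.sqrt x * Real.tanh (Real.sqrt x / 2)) :=
  concaveOn_comp_sqrt_of_antitoneOn (fun t ht => hasDerivAt_mul_tanh_half t ht.ne')
    fun a ha b hb hab => div_le_div_of_nonneg_right
      (antitoneOn_tanh_div_self_add_inv_cosh_sq (mem_Ioi.2 (half_pos ha))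
        (mem_Ioi.2 (half_pos hb)) (by linarith))
      zero_le_two
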